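/- arXiv:1407.5016 — 10 statements merged into one kernel-verified Lean document; each statement's English description precedes it below -/
import Mathlib

section
/- Let X be a strictly convex real normed linear space and let {x_1, x_2, ..., x_n} be a strongly orthonormal set in X in the sense of Birkhoff-James. Let x_{n+1} be a unit vector of X not lying in span{x_1, ..., x_n}, and suppose w ∈ span{x_1, ..., x_n} is the best coapproximation to x_{n+1} out of span{x_1, ..., x_n}. Then the set {x_1, x_2, ..., x_n, (x_{n+1} - w)/‖x_{n+1} - w‖} is strongly orthonormal relative to x_i in the sense of Birkhoff-James for each i = 1, 2, ..., n. -/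
/-- `x` together with the family is strongly orthonormal *relative to* the element `x i₀`
in the sense of Birkhoff-James: all members are unit vectors and
`‖x i₀‖ < ‖x i₀ + ∑_{j ≠ i₀} c j • x j‖` whenever not all the `c j` (`j ≠ i₀`) vanish. -/
def StronglyOrthRel {X : Type*} [NormedAddCommGroup X] [NormedSpace ℝ X]
    {n : ℕ} (x : Fin n → X) (i₀ : Fin n) : Prop :=
  (∀ i, ‖x i‖ = 1) ∧
    ∀ c : Fin n → ℝ, (∃ j, j ≠ i₀ ∧ c j ≠ 0) →
      ‖x i₀‖ < ‖x i₀ + ∑ j ∈ Finset.univ.erase i₀, c j • x j‖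

/-- A finite family of unit vectors that is strongly orthonormal in the sense of
Birkhoff-James. -/
def StronglyOrthSet {X : Type*} [NormedAddCommGroup X] [NormedSpace ℝ X]
    {n : ℕ} (x : Fin n → X) : Prop :=
  ∀ i, StronglyOrthRel x i

private lemma sum_erase_castSucc {X : Type*} [AddCommGroup X] {n : ℕ}
    (f : Fin (n + 1) → X) (i : Fin n) :
    ∑ j ∈ Finset.univ.erase i.castSucc, f j
      = (∑ j ∈ Finset.univ.erase i, f j.castSucc) + f (Fin.last n) := by
  have h1 : ∑ j ∈ Finset.univ.erase i.castSucc, f j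
      = (∑ j, f j) - f i.castSucc := by
    rw [eq_sub_iff_add_eq, Finset.sum_erase_add _ _ (Finset.mem_univ _)]
  have h2 : ∑ j ∈ Finset.univ.erase i, f j.castSucc
      = (∑ j : Fin n, f j.castSucc) - f i.castSucc := by
    rw [eq_sub_iff_add_eq, Finset.sum_erase_add _ _ (Finset.mem_univ _)]
  rw [h1, h2, Fin.sum_univ_castSucc f]
  abel

theorem stmt_0 {X : Type*} [NormedAddCommGroup X] [NormedSpace ℝ X] [StrictConvexSpace ℝ X]
    {n : ℕ} (x : Fin n → X) (hso : StronglyOrthSet x)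
    (x' : X) (hx' : ‖x'‖ = 1) (hx'span : x' ∉ Submodule.span ℝ (Set.range x))
    (w : X) (hw : w ∈ Submodule.span ℝ (Set.range x))
    (hbc : ∀ g ∈ Submodule.span ℝ (Set.range x), ‖w - g‖ ≤ ‖x' - g‖) :
    ∀ i : Fin n,
      StronglyOrthRel (Fin.snoc x ((‖x' - w‖)⁻¹ • (x' - w))) i.castSucc := by
  have hxw : x' - w ≠ 0 := by
    intro h
    exact hx'span (by rw [sub_eq_zero] at h; rw [h]; exact hw)
  have hnxw : ‖x' - w‖ ≠ 0 := norm_ne_zero_iff.mpr hxw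
  set y : X := (‖x' - w‖)⁻¹ • (x' - w) with hy
  have hny : ‖y‖ = 1 := by
    rw [hy, norm_smul, norm_inv, norm_norm, inv_mul_cancel₀ hnxw]
  -- key coapproximation inequality
  have key : ∀ h ∈ Submodule.span ℝ (Set.range x), ∀ t : ℝ, ‖h‖ ≤ ‖h + t • (x' - w)‖ := by
    intro h hh t
    rcases eq_or_ne t 0 with rfl | ht
    · simp
    · have := hbc (w - t⁻¹ • h) (Submodule.sub_mem _ hw (Submodule.smul_mem _ _ hh))
      have e1 : w - (w - t⁻¹ • h) = t⁻¹ • h := by abel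
      have e2 : x' - (w - t⁻¹ • h) = t⁻¹ • (h + t • (x' - w)) := by
        rw [smul_add, smul_smul, inv_mul_cancel₀ ht, one_smul]
        abel
      rw [e1, e2, norm_smul, norm_smul] at this
      have hpos : (0 : ℝ) < ‖(t : ℝ)⁻¹‖ := by
        simpa [norm_pos_iff] using inv_ne_zero ht
      exact le_of_mul_le_mul_left this hpos
  intro i
  constructor
  · intro j
    rcases Fin.eq_castSucc_or_eq_last j with ⟨j', rfl⟩ | rfl
    · simpa using (hso j').1 j'
    · simpa using hny
  · intro c hc
    rw [sum_erase_castSucc (fun j => c j • (Fin.snoc x y : Fin (n + 1) → X) j) i]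
    simp only [Fin.snoc_castSucc, Fin.snoc_last]
    set v : X := ∑ j ∈ Finset.univ.erase i, c j.castSucc • x j with hv
    have hvmem : v ∈ Submodule.span ℝ (Set.range x) :=
      Submodule.sum_mem _ fun j _ =>
        Submodule.smul_mem _ _ (Submodule.subset_span ⟨j, rfl⟩)
    set μ : ℝ := c (Fin.last n) * (‖x' - w‖)⁻¹ with hμ
    have hys : c (Fin.last n) • y = μ • (x' - w) := by
      rw [hy, hμ, smul_smul]
    rw [hys]
    rcases eq_or_ne (c (Fin.last n)) 0 with hlast | hlast
    · -- last coefficient zero: reduce to hso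
      obtain ⟨j, hji, hcj⟩ := hc
      obtain ⟨j', rfl⟩ | rfl := Fin.eq_castSucc_or_eq_last j
      swap
      · exact absurd hlast hcj
      have hμ0 : μ = 0 := by rw [hμ, hlast, zero_mul]
      rw [hμ0, zero_smul, add_zero]
      exact (hso i).2 (fun j => c j.castSucc)
        ⟨j', fun h => hji (by rw [h]), hcj⟩
    · have hμ0 : μ ≠ 0 := mul_ne_zero hlast (inv_ne_zero hnxw)
      by_cases hall : ∀ j : Fin n, j ≠ i → c j.castSucc = 0
      · -- v = 0, use strict convexity
        have hv0 : v = 0 := by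
          rw [hv]
          apply Finset.sum_eq_zero
          intro j hj
          rw [hall j (Finset.ne_of_mem_erase hj), zero_smul]
        rw [hv0, zero_add]
        have hxi : ‖x i‖ = 1 := (hso i).1 i
        set b : X := x i + μ • (x' - w) with hb
        have hab : x i ≠ b := by
          rw [hb]
          intro h
          have : μ • (x' - w) = 0 := by
            have := congrArg (· - x i) h
            simpa using this.symm
          exact hxw (by simpa [hμ0] using (smul_eq_zero.mp this))
        have hle : ‖x i‖ ≤ ‖b‖ := key _ (Submodule.subset_span ⟨i, rfl⟩) μ
        rcases lt_or_eq_of_le hle with h | h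
        · exact h
        · exfalso
          have hmid : ‖(1 / 2 : ℝ) • (x i + b)‖ < ‖x i‖ :=
            (norm_midpoint_lt_iff h).mpr hab
          have : (1 / 2 : ℝ) • (x i + b) = x i + (μ / 2) • (x' - w) := by
            rw [hb]
            rw [smul_add, smul_add]
            rw [smul_smul]
            module
          rw [this] at hmid
          exact absurd (key _ (Submodule.subset_span ⟨i, rfl⟩) (μ / 2)) (not_le.mpr hmid)
      · -- some coefficient nonzero: strict from hso, then key
        push_neg at hall
        obtain ⟨j, hji, hcj⟩ := hall
        have h1 : ‖x i‖ < ‖x i + v‖ :=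
          (hso i).2 (fun j => c j.castSucc) ⟨j, hji, hcj⟩
        have h2 : ‖x i + v‖ ≤ ‖x i + v + μ • (x' - w)‖ :=
          key _ (Submodule.add_mem _ (Submodule.subset_span ⟨i, rfl⟩) hvmem) μ
        calc ‖x i‖ < ‖x i + v‖ := h1
          _ ≤ ‖x i + v + μ • (x' - w)‖ := h2
          _ = ‖x i + (v + μ • (x' - w))‖ := by rw [add_assoc]
end

section
/- Let {x_1, x_2, ..., x_n} be a strongly orthonormal set in the sense of Birkhoff-James in a real normed linear space X. Then for all scalars α_1, ..., α_n, ‖α_1 x_1 + α_2 x_2 + ... + α_n x_n‖ ≥ max{|α_i| : 1 ≤ i ≤ n}. -/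
theorem stmt_2 {X : Type*} [NormedAddCommGroup X] [NormedSpace ℝ X]
    {n : ℕ} (x : Fin n → X) (hso : StronglyOrthSet x)
    (α : Fin n → ℝ) (i : Fin n) :
    |α i| ≤ ‖∑ j, α j • x j‖ := by
  obtain ⟨hunit, hrel⟩ := hso i
  rcases eq_or_ne (α i) 0 with h0 | h0
  · simp [h0]
  · have key : ∑ j, α j • x j = α i • (x i + ∑ j ∈ Finset.univ.erase i,
        ((α j / α i) : ℝ) • x j) := by
      rw [smul_add, Finset.smul_sum]
      rw [← Finset.add_sum_erase _ _ (Finset.mem_univ i)]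
      congr 1
      refine Finset.sum_congr rfl fun j _ => ?_
      rw [smul_smul, mul_div_cancel₀ _ h0]
    rw [key, norm_smul, Real.norm_eq_abs]
    rcases Classical.em (∃ j, j ≠ i ∧ (α j / α i) ≠ 0) with h | h
    · have := hrel (fun j => α j / α i) h
      rw [hunit i] at this
      nlinarith [abs_pos.mpr h0]
    · push_neg at h
      have : ∑ j ∈ Finset.univ.erase i, ((α j / α i) : ℝ) • x j = 0 := by
        refine Finset.sum_eq_zero fun j hj => ?_
        rw [h j (Finset.ne_of_mem_erase hj), zero_smul]
      rw [this, add_zero, hunit i, mul_one]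
end

section
/- Let X be a strictly convex real normed linear space and let x, y be unit vectors of X with x Birkhoff-James orthogonal to y. Then x is strongly Birkhoff-James orthogonal to y, i.e. ‖x‖ < ‖x + λy‖ for every scalar λ ≠ 0. -/
theorem stmt_4 {X : Type*} [NormedAddCommGroup X] [NormedSpace ℝ X] [StrictConvexSpace ℝ X]
    (x y : X) (hx : ‖x‖ = 1) (hy : ‖y‖ = 1)
    (h : ∀ l : ℝ, ‖x‖ ≤ ‖x + l • y‖) :
    ∀ l : ℝ, l ≠ 0 → ‖x‖ < ‖x + l • y‖ := by
  intro l hl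
  rcases lt_or_eq_of_le (h l) with hlt | heq
  · exact hlt
  · exfalso
    have hmid : x + (x + l • y) = (2 : ℝ) • (x + (l / 2) • y) := by
      rw [smul_add, smul_smul]; ring_nf
      rw [two_smul]; abel
    have hub : ‖x + (l / 2) • y‖ ≤ 1 := by
      have h3 := norm_add_le x (x + l • y)
      rw [hmid, norm_smul] at h3
      simp only [Real.norm_ofNat] at h3
      nlinarith [hx, heq.symm]
    have hlb : (1 : ℝ) ≤ ‖x + (l / 2) • y‖ := hx ▸ h (l / 2)
    have hmidnorm : ‖x + (l / 2) • y‖ = 1 := le_antisymm hub hlb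
    have h2 : ‖x + (x + l • y)‖ = ‖x‖ + ‖x + l • y‖ := by
      rw [hmid, norm_smul, hmidnorm, ← heq, hx]
      norm_num
    have heq2 : x = x + l • y := eq_of_norm_eq_of_norm_add_eq heq h2
    have hz : l • y = 0 := by
      have := heq2.symm
      simpa [add_eq_left] using this
    rw [smul_eq_zero] at hz
    rcases hz with h' | h'
    · exact hl h'
    · rw [h', norm_zero] at hy; norm_num at hy
end

section
/- Let 1 < p < ∞ with p ≠ 2. In the real normed linear space (ℝ², ‖·‖_p) there exists a unit vector (x, y) such that for every vector (u, v), if (x, y) is Birkhoff-James orthogonal to (u, v) and (u, v) is Birkhoff-James orthogonal to (x, y), then u = v = 0. In particular, there is no strongly orthonormal Hamel basis in the sense of Birkhoff-James containing (x, y). -/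
/-!
If `x ⊥_B y` in `ℓ^p`, then `t = 0` minimises the differentiable function
`t ↦ ∑ |xᵢ + t yᵢ|^p`, so `∑ |xᵢ|^(p-2) xᵢ yᵢ = 0`. For `x = (2, 1)` and `y = (u, v)` this gives
`v = -2^(p-1) u`; feeding that into the reverse relation `y ⊥_B x` leaves
`(2 - 2^((p-1)^2)) |u|^(p-2) u = 0`, and `(p - 1)^2 = 1` only for `p = 2`, so `u = v = 0`.
Normalising `(2, 1)` does not affect either orthogonality relation.
-/

open Real

def BirkhoffJamesOrthogonal {E : Type*} [Norm E] [Add E] [SMul ℝ E] (x y : E) : Prop :=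
  ∀ l : ℝ, ‖x‖ ≤ ‖x + l • y‖

namespace BirkhoffJamesOrthogonal

variable {E : Type*} [SeminormedAddCommGroup E] [NormedSpace ℝ E] {x y : E} {c : ℝ}

theorem of_smul_left (hc : c ≠ 0) (h : BirkhoffJamesOrthogonal (c • x) y) :
    BirkhoffJamesOrthogonal x y := fun l => by
  have := h (c * l)
  rw [mul_smul, ← smul_add, norm_smul, norm_smul] at this
  exact le_of_mul_le_mul_left this (norm_pos_iff.mpr hc)

theorem of_smul_right (hc : c ≠ 0) (h : BirkhoffJamesOrthogonal x (c • y)) :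
    BirkhoffJamesOrthogonal x y := fun l => by
  simpa [smul_smul, hc] using h (l / c)

end BirkhoffJamesOrthogonal

/-- `|t| ^ (p - 1) sign t`, the derivative of `t ↦ |t| ^ p / p`. -/
noncomputable def signedRpow (p t : ℝ) : ℝ := |t| ^ (p - 2) * t

theorem signedRpow_eq_zero_iff {p t : ℝ} : signedRpow p t = 0 ↔ t = 0 := by
  unfold signedRpow
  constructor
  · intro h
    by_contra ht
    exact mul_ne_zero (rpow_pos_of_pos (abs_pos.mpr ht) _).ne' ht h
  · rintro rfl; simp

theorem signedRpow_mul {a : ℝ} (ha : 0 < a) (p t : ℝ) :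
    signedRpow p (a * t) = a ^ (p - 1) * signedRpow p t := by
  unfold signedRpow
  rw [abs_mul, abs_of_pos ha, mul_rpow ha.le (abs_nonneg t), show p - 1 = p - 2 + 1 by ring,
    rpow_add_one ha.ne']
  ring

theorem signedRpow_neg (p t : ℝ) : signedRpow p (-t) = -signedRpow p t := by
  simp [signedRpow]

theorem signedRpow_of_pos {p t : ℝ} (ht : 0 < t) : signedRpow p t = t ^ (p - 1) := by
  simpa [show signedRpow p 1 = 1 by simp [signedRpow]] using signedRpow_mul ht p 1

namespace PiLp

variable {ι : Type*} [Fintype ι] {p : ℝ}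

theorem norm_le_norm_iff_sum_abs_rpow (hp : 0 < p)
    (x y : PiLp (ENNReal.ofReal p) fun _ : ι => ℝ) :
    ‖x‖ ≤ ‖y‖ ↔ ∑ i, |x i| ^ p ≤ ∑ i, |y i| ^ p := by
  have hp' : 0 < (ENNReal.ofReal p).toReal := by rwa [ENNReal.toReal_ofReal hp.le]
  simp only [norm_eq_sum hp', ENNReal.toReal_ofReal hp.le, Real.norm_eq_abs]
  exact rpow_le_rpow_iff (by positivity) (by positivity) (by positivity)

theorem sum_signedRpow_mul_eq_zero_of_birkhoffJamesOrthogonal (hp : 1 < p)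
    {x y : PiLp (ENNReal.ofReal p) fun _ : ι => ℝ} (h : BirkhoffJamesOrthogonal x y) :
    ∑ i, signedRpow p (x i) * y i = 0 := by
  have hderiv : HasDerivAt (fun l : ℝ => ∑ i, |x i + l * y i| ^ p)
      (∑ i, p * signedRpow p (x i) * y i) 0 := by
    refine HasDerivAt.fun_sum fun i _ => ?_
    have := (hasDerivAt_abs_rpow (x i + 0 * y i) hp).comp 0
      ((hasDerivAt_mul_const (y i)).const_add (x i))
    simpa [signedRpow, mul_assoc, Function.comp_def] using this
  have hmin : IsLocalMin (fun l : ℝ => ∑ i, |x i + l * y i| ^ p) 0 :=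
    Filter.Eventually.of_forall fun l => by
      simpa using (norm_le_norm_iff_sum_abs_rpow (by linarith) _ _).mp (h l)
  have := hmin.hasDerivAt_eq_zero hderiv
  simp_rw [mul_assoc, ← Finset.mul_sum] at this
  exact (mul_eq_zero.mp this).resolve_left (by positivity)

theorem eq_zero_of_birkhoffJamesOrthogonal_two_one (hp : 1 < p) (hp2 : p ≠ 2)
    {u : PiLp (ENNReal.ofReal p) fun _ : Fin 2 => ℝ}
    (hwu : BirkhoffJamesOrthogonal (WithLp.toLp (ENNReal.ofReal p) ![2, 1]) u)
    (huw : BirkhoffJamesOrthogonal u (WithLp.toLp (ENNReal.ofReal p) ![2, 1])) : u = 0 := by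
  have h2 : (0 : ℝ) < 2 ^ (p - 1) := by positivity
  have hu1 : u 1 = -(2 ^ (p - 1) * u 0) := by
    have := sum_signedRpow_mul_eq_zero_of_birkhoffJamesOrthogonal hp hwu
    simp only [Fin.sum_univ_two, Matrix.cons_val_zero, Matrix.cons_val_one,
      signedRpow_of_pos two_pos, signedRpow_of_pos one_pos, one_rpow] at this
    linarith
  have hs : (2 - (2 ^ (p - 1)) ^ (p - 1)) * signedRpow p (u 0) = 0 := by
    have := sum_signedRpow_mul_eq_zero_of_birkhoffJamesOrthogonal hp huw
    simp only [Fin.sum_univ_two, Matrix.cons_val_zero, Matrix.cons_val_one, hu1,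
      signedRpow_neg, signedRpow_mul h2] at this
    linear_combination this
  have hexp : (2 ^ (p - 1) : ℝ) ^ (p - 1) ≠ 2 := by
    rw [← rpow_mul zero_le_two]
    intro h
    have : (p - 1) * (p - 1) = 1 :=
      (rpow_right_inj two_pos one_lt_two.ne').mp (h.trans (rpow_one 2).symm)
    have : p * (p - 2) = 0 := by linear_combination this
    rcases mul_eq_zero.mp this with hp0 | hp2'
    · linarith
    · exact hp2 (by linarith)
  have hu0 : u 0 = 0 :=
    signedRpow_eq_zero_iff.mp ((mul_eq_zero.mp hs).resolve_left (sub_ne_zero.mpr hexp.symm))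
  ext i
  fin_cases i
  · exact hu0
  · simp [hu1, hu0]

end PiLp

theorem stmt_5 (p : ℝ) (hp : 1 < p) (hp2 : p ≠ 2)
    [Fact (1 ≤ ENNReal.ofReal p)] :
    ∃ v : PiLp (ENNReal.ofReal p) (fun _ : Fin 2 => ℝ), ‖v‖ = 1 ∧
      ∀ u : PiLp (ENNReal.ofReal p) (fun _ : Fin 2 => ℝ),
        (∀ l : ℝ, ‖v‖ ≤ ‖v + l • u‖) → (∀ l : ℝ, ‖u‖ ≤ ‖u + l • v‖) → u = 0 := by
  set w : PiLp (ENNReal.ofReal p) (fun _ : Fin 2 => ℝ) := WithLp.toLp _ ![2, 1]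
  have hw : w ≠ 0 := fun h => by simpa [w] using congrArg (· 1) h
  have hc : ‖w‖⁻¹ ≠ 0 := inv_ne_zero (norm_ne_zero_iff.mpr hw)
  refine ⟨‖w‖⁻¹ • w, norm_smul_inv_norm hw, fun u hwu huw => ?_⟩
  exact PiLp.eq_zero_of_birkhoffJamesOrthogonal_two_one hp hp2
    (BirkhoffJamesOrthogonal.of_smul_left hc hwu) (BirkhoffJamesOrthogonal.of_smul_right hc huw)
end

section
/- Let 1 < p < ∞ and k > 1, and consider in (ℝ², ‖·‖_p) the unit vector (x_0, y_0) = (1/(1+k^p)^{1/p}, k/(1+k^p)^{1/p}). If (x_1, y_1) is a unit vector of (ℝ², ‖·‖_p) such that (x_0, y_0) is Birkhoff-James orthogonal to (x_1, y_1), then (x_1, y_1) = ±( -k^{p-1}/(1+k^{p(p-1)})^{1/p}, 1/(1+k^{p(p-1)})^{1/p} ). -/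
/-- The vector `(a, b)` viewed as an element of `(ℝ², ‖·‖_p)`. -/
noncomputable def vecP (p : ℝ) (a b : ℝ) : PiLp (ENNReal.ofReal p) (fun _ : Fin 2 => ℝ) :=
  (WithLp.equiv (ENNReal.ofReal p) (Fin 2 → ℝ)).symm ![a, b]

/-!
Since `x₀, y₀ > 0`, the function `l ↦ ‖(x₀, y₀) + l • v‖ ^ p = |x₀ + l v₀| ^ p + |y₀ + l v₁| ^ p`
is differentiable at `0`, and Birkhoff–James orthogonality says that it is minimal there. Hence its
derivative `p (v₀ x₀ ^ (p - 1) + v₁ y₀ ^ (p - 1))` vanishes; as `y₀ = k x₀` this forces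
`v₀ = -k ^ (p - 1) v₁`, and `‖v‖ = 1` then determines `v₁` up to sign.
-/

section Lp

variable {ι : Type*} [Fintype ι] {p : ℝ}

theorem PiLp.norm_ofReal_eq_sum (hp : 0 < p)
    (v : PiLp (ENNReal.ofReal p) (fun _ : ι => ℝ)) :
    ‖v‖ = (∑ i, |v i| ^ p) ^ (1 / p) := by
  have hp' : 0 < (ENNReal.ofReal p).toReal := by rwa [ENNReal.toReal_ofReal hp.le]
  rw [PiLp.norm_eq_sum hp', ENNReal.toReal_ofReal hp.le]
  rfl

theorem PiLp.norm_ofReal_rpow_eq_sum (hp : 0 < p)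
    (v : PiLp (ENNReal.ofReal p) (fun _ : ι => ℝ)) :
    ‖v‖ ^ p = ∑ i, |v i| ^ p := by
  rw [PiLp.norm_ofReal_eq_sum hp, ← Real.rpow_mul (by positivity), one_div_mul_cancel hp.ne',
    Real.rpow_one]

theorem hasDerivAt_abs_add_mul_rpow_zero {c : ℝ} (hc : 0 < c) (w : ℝ) :
    HasDerivAt (fun l : ℝ => |c + l * w| ^ p) (w * p * c ^ (p - 1)) 0 := by
  have hlin : HasDerivAt (fun l : ℝ => c + l * w) w 0 := (hasDerivAt_mul_const w).const_add c
  have hpos : ∀ᶠ l in nhds (0 : ℝ), 0 < c + l * w :=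
    hlin.continuousAt.eventually (Ioi_mem_nhds (by simpa using hc))
  have hrpow : HasDerivAt (fun l : ℝ => (c + l * w) ^ p) (w * p * c ^ (p - 1)) 0 := by
    simpa using hlin.rpow_const (p := p) (Or.inl (by simpa using hc.ne'))
  exact hrpow.congr_of_eventuallyEq (hpos.mono fun l hl => by simp only [abs_of_pos hl])

theorem sum_mul_rpow_eq_zero_of_forall_norm_le_norm_add_smul (hp : 0 < p)
    {x v : PiLp (ENNReal.ofReal p) (fun _ : ι => ℝ)} (hx : ∀ i, 0 < x i)
    (horth : ∀ l : ℝ, ‖x‖ ≤ ‖x + l • v‖) :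
    ∑ i, v i * x i ^ (p - 1) = 0 := by
  set g : ℝ → ℝ := fun l => ‖x + l • v‖ ^ p
  have hg : g = fun l => ∑ i, |x i + l * v i| ^ p := by
    ext l; simp [g, PiLp.norm_ofReal_rpow_eq_sum hp]
  have hnorm_nonneg : 0 ≤ ‖x‖ := by rw [PiLp.norm_ofReal_eq_sum hp]; positivity
  have hmin : IsLocalMin g 0 := Filter.Eventually.of_forall fun l => by
    simpa [g] using Real.rpow_le_rpow hnorm_nonneg (horth l) hp.le
  have hderiv : HasDerivAt g (∑ i, v i * p * x i ^ (p - 1)) 0 := by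
    rw [hg]
    exact HasDerivAt.fun_sum fun i _ => hasDerivAt_abs_add_mul_rpow_zero (hx i) (v i)
  have := hmin.hasDerivAt_eq_zero hderiv
  simp_rw [mul_right_comm _ p, ← Finset.sum_mul] at this
  exact (mul_eq_zero.mp this).resolve_right hp.ne'

end Lp

@[simp]
theorem vecP_apply_zero (p a b : ℝ) : vecP p a b 0 = a := rfl

@[simp]
theorem vecP_apply_one (p a b : ℝ) : vecP p a b 1 = b := rfl

theorem eq_vecP {p : ℝ} (v : PiLp (ENNReal.ofReal p) (fun _ : Fin 2 => ℝ)) :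
    v = vecP p (v 0) (v 1) := by
  ext i; fin_cases i <;> rfl

theorem neg_vecP (p a b : ℝ) : -vecP p a b = vecP p (-a) (-b) := by
  ext i; fin_cases i <;> rfl

theorem abs_eq_of_abs_mul_rpow_add_abs_rpow_eq_one {p m b : ℝ} (hp : 0 < p) (hm : 0 ≤ m)
    (h : |m * b| ^ p + |b| ^ p = 1) : |b| = 1 / (1 + m ^ p) ^ (1 / p) := by
  have hm' : 0 < 1 + m ^ p := by positivity
  have hbp : |b| ^ p = 1 / (1 + m ^ p) := by
    rw [abs_mul, abs_of_nonneg hm, Real.mul_rpow hm (abs_nonneg b)] at h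
    field_simp
    linarith
  calc |b| = (|b| ^ p) ^ (1 / p) := by
        rw [← Real.rpow_mul (abs_nonneg b), mul_one_div_cancel hp.ne', Real.rpow_one]
    _ = 1 / (1 + m ^ p) ^ (1 / p) := by
        rw [hbp, Real.div_rpow zero_le_one hm'.le, Real.one_rpow]

theorem stmt_6_general (p : ℝ) (hp : 1 < p) (k : ℝ) (hk : 1 < k)
    (v : PiLp (ENNReal.ofReal p) (fun _ : Fin 2 => ℝ)) (hv : ‖v‖ = 1)
    (horth : ∀ l : ℝ,
      ‖vecP p (1 / (1 + k ^ p) ^ (1 / p)) (k / (1 + k ^ p) ^ (1 / p))‖ ≤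
        ‖vecP p (1 / (1 + k ^ p) ^ (1 / p)) (k / (1 + k ^ p) ^ (1 / p)) + l • v‖) :
    v = vecP p (-(k ^ (p - 1)) / (1 + k ^ (p * (p - 1))) ^ (1 / p))
          (1 / (1 + k ^ (p * (p - 1))) ^ (1 / p)) ∨
    v = -vecP p (-(k ^ (p - 1)) / (1 + k ^ (p * (p - 1))) ^ (1 / p))
          (1 / (1 + k ^ (p * (p - 1))) ^ (1 / p)) := by
  have hp0 : 0 < p := zero_lt_one.trans hp
  have hk0 : 0 < k := zero_lt_one.trans hk
  set A := (1 + k ^ p) ^ (1 / p)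
  have hA : 0 < A := by positivity
  have hcrit : v 0 * (1 / A) ^ (p - 1) + v 1 * (k / A) ^ (p - 1) = 0 := by
    have hx : ∀ i, 0 < vecP p (1 / A) (k / A) i := by
      intro i; fin_cases i <;> simp [hA, hk0]
    simpa using sum_mul_rpow_eq_zero_of_forall_norm_le_norm_add_smul hp0 hx horth
  have hv0 : v 0 = -k ^ (p - 1) * v 1 := by
    rw [Real.div_rpow hk0.le hA.le, Real.div_rpow zero_le_one hA.le, Real.one_rpow] at hcrit
    field_simp at hcrit
    linarith
  have hunit : |k ^ (p - 1) * v 1| ^ p + |v 1| ^ p = 1 := by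
    rw [← abs_neg, ← neg_mul, ← hv0, ← Fin.sum_univ_two (fun i => |v i| ^ p),
      ← PiLp.norm_ofReal_rpow_eq_sum hp0, hv, Real.one_rpow]
  have hv1 : |v 1| = 1 / (1 + k ^ (p * (p - 1))) ^ (1 / p) := by
    rw [mul_comm p, Real.rpow_mul hk0.le]
    exact abs_eq_of_abs_mul_rpow_add_abs_rpow_eq_one hp0 (by positivity) hunit
  rw [neg_vecP, eq_vecP v, hv0]
  rcases abs_eq (by positivity) |>.mp hv1 with h | h
  · left; rw [h]; congr 1; ring
  · right; rw [h]; congr 1; ring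

theorem stmt_6 (p : ℝ) (hp : 1 < p) (k : ℝ) (hk : 1 < k)
    [Fact (1 ≤ ENNReal.ofReal p)]
    (v : PiLp (ENNReal.ofReal p) (fun _ : Fin 2 => ℝ)) (hv : ‖v‖ = 1)
    (horth : ∀ l : ℝ,
      ‖vecP p (1 / (1 + k ^ p) ^ (1 / p)) (k / (1 + k ^ p) ^ (1 / p))‖ ≤
        ‖vecP p (1 / (1 + k ^ p) ^ (1 / p)) (k / (1 + k ^ p) ^ (1 / p)) + l • v‖) :
    v = vecP p (-(k ^ (p - 1)) / (1 + k ^ (p * (p - 1))) ^ (1 / p))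
          (1 / (1 + k ^ (p * (p - 1))) ^ (1 / p)) ∨
    v = -vecP p (-(k ^ (p - 1)) / (1 + k ^ (p * (p - 1))) ^ (1 / p))
          (1 / (1 + k ^ (p * (p - 1))) ^ (1 / p)) :=
  stmt_6_general p hp k hk v hv horth
end

section
/- Let 1 < p < ∞ with p ≠ 2 and let k > 1. In (ℝ², ‖·‖_p), the unit vector (x_1, y_1) = ( -k^{p-1}/(1+k^{p(p-1)})^{1/p}, 1/(1+k^{p(p-1)})^{1/p} ) is NOT Birkhoff-James orthogonal to the unit vector (x_0, y_0) = (1/(1+k^p)^{1/p}, k/(1+k^p)^{1/p}); that is, there exists a scalar λ with ‖(x_1, y_1) + λ(x_0, y_0)‖_p < 1. -/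
open Real

theorem exists_lt_of_hasDerivAt_ne_zero {f : ℝ → ℝ} {D a : ℝ} (hf : HasDerivAt f D a)
    (hD : D ≠ 0) : ∃ x, f x < f a := by
  by_contra! h
  exact hD (IsLocalMin.hasDerivAt_eq_zero (Filter.Eventually.of_forall h) hf)

theorem rpow_sub_two_mul_self {t : ℝ} (ht : 0 < t) (p : ℝ) : t ^ (p - 2) * t = t ^ (p - 1) := by
  rw [← rpow_add_one ht.ne']
  ring_nf

section vecP

variable {p : ℝ}

theorem vecP_add_smul (a b c d l : ℝ) :
    vecP p a b + l • vecP p c d = vecP p (a + l * c) (b + l * d) := by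
  ext i
  fin_cases i <;> simp [vecP]

theorem norm_vecP (hp : 0 < p) (a b : ℝ) :
    ‖vecP p a b‖ = (|a| ^ p + |b| ^ p) ^ (1 / p) := by
  have hp' : (ENNReal.ofReal p).toReal = p := ENNReal.toReal_ofReal hp.le
  rw [PiLp.norm_eq_sum (by rwa [hp']), hp']
  simp [vecP, Fin.sum_univ_two]

theorem norm_vecP_nonneg (hp : 0 < p) (a b : ℝ) : 0 ≤ ‖vecP p a b‖ := by
  rw [norm_vecP hp]
  positivity

theorem norm_vecP_div (hp : 0 < p) (a b : ℝ) {c : ℝ} (hc : 0 < c) :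
    ‖vecP p (a / c) (b / c)‖ = ‖vecP p a b‖ / c := by
  simp only [norm_vecP hp, abs_div, abs_of_pos hc, div_rpow (abs_nonneg _) hc.le, ← add_div]
  rw [div_rpow (by positivity) (by positivity), ← rpow_mul hc.le, mul_one_div_cancel hp.ne',
    rpow_one]

theorem norm_vecP_rpow (hp : 0 < p) (a b : ℝ) :
    ‖vecP p a b‖ ^ p = |a| ^ p + |b| ^ p := by
  rw [norm_vecP hp, ← rpow_mul (by positivity), one_div_mul_cancel hp.ne', rpow_one]

theorem hasDerivAt_norm_vecP_add_smul_rpow (hp : 1 < p) (a b c d : ℝ) :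
    HasDerivAt (fun l : ℝ => ‖vecP p a b + l • vecP p c d‖ ^ p)
      (p * (|a| ^ (p - 2) * a * c + |b| ^ (p - 2) * b * d)) 0 := by
  have hline (u v : ℝ) : HasDerivAt (fun l : ℝ => u + l * v) v 0 := by
    simpa using ((hasDerivAt_id (0 : ℝ)).mul_const v).const_add u
  have hfirst := (hasDerivAt_abs_rpow a hp).comp_of_eq (0 : ℝ) (hline a c) (by simp)
  have hsecond := (hasDerivAt_abs_rpow b hp).comp_of_eq (0 : ℝ) (hline b d) (by simp)
  have hexpand : (fun l : ℝ => ‖vecP p a b + l • vecP p c d‖ ^ p)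
      = fun l => |a + l * c| ^ p + |b + l * d| ^ p := by
    funext l
    rw [vecP_add_smul, norm_vecP_rpow (zero_lt_one.trans hp)]
  rw [hexpand]
  exact (hfirst.add hsecond).congr_deriv (by ring)

theorem exists_norm_vecP_add_smul_lt (hp : 1 < p) {a b c d : ℝ}
    (h : |a| ^ (p - 2) * a * c + |b| ^ (p - 2) * b * d ≠ 0) :
    ∃ l : ℝ, ‖vecP p a b + l • vecP p c d‖ < ‖vecP p a b‖ := by
  have hp0 : 0 < p := zero_lt_one.trans hp
  obtain ⟨l, hl⟩ := exists_lt_of_hasDerivAt_ne_zero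
    (hasDerivAt_norm_vecP_add_smul_rpow hp a b c d) (mul_ne_zero hp0.ne' h)
  refine ⟨l, (rpow_lt_rpow_iff ?_ (norm_vecP_nonneg hp0 a b) hp0).1 (by simpa using hl)⟩
  rw [vecP_add_smul]
  exact norm_vecP_nonneg hp0 _ _

end vecP

theorem stmt_7_general (p : ℝ) (hp : 1 < p) (hp2 : p ≠ 2) (k : ℝ) (hk : 1 < k) :
    ∃ l : ℝ,
      ‖vecP p (-(k ^ (p - 1)) / (1 + k ^ (p * (p - 1))) ^ (1 / p))
            (1 / (1 + k ^ (p * (p - 1))) ^ (1 / p)) +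
          l • vecP p (1 / (1 + k ^ p) ^ (1 / p)) (k / (1 + k ^ p) ^ (1 / p))‖ < 1 := by
  have hp0 : 0 < p := zero_lt_one.trans hp
  have hk0 : 0 < k := zero_lt_one.trans hk
  set S := (1 + k ^ (p * (p - 1))) ^ (1 / p) with hS
  set T := (1 + k ^ p) ^ (1 / p)
  have hS0 : 0 < S := by positivity
  have hT0 : 0 < T := by positivity
  have hunit : ‖vecP p (-(k ^ (p - 1)) / S) (1 / S)‖ = 1 := by
    rw [norm_vecP_div hp0 _ _ hS0, norm_vecP hp0, abs_neg, abs_one, one_rpow,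
      abs_of_pos (by positivity), ← rpow_mul hk0.le, mul_comm (p - 1), add_comm, ← hS,
      div_self hS0.ne']
  have hexp : (p - 1) * (p - 1) ≠ 1 := by
    intro h
    rcases mul_self_eq_one_iff.1 h with h' | h' <;> [exact hp2 (by linarith); linarith]
  have hpow : k ^ ((p - 1) * (p - 1)) ≠ k := by
    simpa only [rpow_one] using (rpow_right_inj hk0 hk.ne').not.2 hexp
  have hpairing : |-(k ^ (p - 1)) / S| ^ (p - 2) * (-(k ^ (p - 1)) / S) * (1 / T)
      + |1 / S| ^ (p - 2) * (1 / S) * (k / T) ≠ 0 := by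
    rw [neg_div, abs_neg, mul_neg, abs_of_pos (by positivity), abs_of_pos (by positivity),
      rpow_sub_two_mul_self (by positivity), rpow_sub_two_mul_self (by positivity),
      div_rpow (by positivity) hS0.le, div_rpow zero_le_one hS0.le, one_rpow,
      ← rpow_mul hk0.le, show -(k ^ ((p - 1) * (p - 1)) / S ^ (p - 1)) * (1 / T) + 1 / S ^ (p - 1) * (k / T)
        = (k - k ^ ((p - 1) * (p - 1))) / (S ^ (p - 1) * T) by ring]
    exact div_ne_zero (sub_ne_zero.2 hpow.symm) (by positivity)
  obtain ⟨l, hl⟩ := exists_norm_vecP_add_smul_lt hp hpairing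
  rw [hunit] at hl
  exact ⟨l, hl⟩

theorem stmt_7 (p : ℝ) (hp : 1 < p) (hp2 : p ≠ 2) (k : ℝ) (hk : 1 < k)
    [Fact (1 ≤ ENNReal.ofReal p)] :
    ∃ l : ℝ,
      ‖vecP p (-(k ^ (p - 1)) / (1 + k ^ (p * (p - 1))) ^ (1 / p))
            (1 / (1 + k ^ (p * (p - 1))) ^ (1 / p)) +
          l • vecP p (1 / (1 + k ^ p) ^ (1 / p)) (k / (1 + k ^ p) ^ (1 / p))‖ < 1 :=
  stmt_7_general p hp hp2 k hk
end

section
/- Let n ≥ 2 and 1 ≤ p ≤ ∞. In the real normed linear space (ℝⁿ, ‖·‖_p), every unit vector is contained in some strongly orthonormal Hamel basis in the sense of Birkhoff-James if and only if p = 2. -/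
/-!
For `p = 2` a unit vector extends to an orthonormal basis, and an orthonormal family is strongly
orthonormal by Pythagoras. For `p ≠ 2` a strongly orthonormal spanning family `b` cannot contain the
unit multiple `v` of `w = (2, 1, 0, …, 0)`. If `b i = v`, then since `x ↦ x₀ - 2 x₁` kills `v` but
not `e₀`, some `y = b j` with `j ≠ i` has `y₀ ≠ 2 y₁`, and some `e₀ - α v` is a nontrivial
combination of the `b j`, `j ≠ i`; `v` is strictly Birkhoff–James (BJ) orthogonal to both.
* `p = ∞`: `w` is strictly BJ orthogonal to nothing, as `‖w + t y‖ ≤ 2 = ‖w‖` for `t = ∓1 / ‖y‖`.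
* `p = 1`: `e₀ - α v` is supported in the support of `v`, and along such directions the
  `ℓ¹` norm is affine near `v`.
* `1 < p < ∞`: the norm is differentiable, so BJ orthogonality of `w` and `y = b j` in both
  directions gives `∑ |wₖ|^(p-2) wₖ yₖ = 0 = ∑ |yₖ|^(p-2) yₖ wₖ`, whence `y₁ = -2^(p-1) y₀` and
  `2 = 2^((p-1)²)`.
-/

open Filter Finset Topology ENNReal

section BirkhoffJames

variable {X : Type*} [NormedAddCommGroup X] [NormedSpace ℝ X]

def BJOrthogonal (x y : X) : Prop :=
  ∀ t : ℝ, ‖x‖ ≤ ‖x + t • y‖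

def StrictBJOrthogonal (x y : X) : Prop :=
  ∀ t : ℝ, t ≠ 0 → ‖x‖ < ‖x + t • y‖

theorem StrictBJOrthogonal.bjOrthogonal {x y : X} (h : StrictBJOrthogonal x y) :
    BJOrthogonal x y := by
  intro t
  rcases eq_or_ne t 0 with rfl | ht
  · simp
  · exact (h t ht).le

theorem StrictBJOrthogonal.of_smul_left {x y : X} {c : ℝ} (h : StrictBJOrthogonal (c • x) y)
    (hc : c ≠ 0) : StrictBJOrthogonal x y := by
  intro t ht
  have key := h (c * t) (mul_ne_zero hc ht)
  rw [mul_smul, ← smul_add, norm_smul, norm_smul] at key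
  exact lt_of_mul_lt_mul_left key (norm_nonneg c)

theorem BJOrthogonal.of_smul_right {x y : X} {c : ℝ} (h : BJOrthogonal x (c • y)) (hc : c ≠ 0) :
    BJOrthogonal x y := by
  intro t
  simpa [smul_smul, inv_mul_cancel_right₀ hc] using h (t * c⁻¹)

variable {n : ℕ} {b : Fin n → X} {i : Fin n}

theorem StronglyOrthRel.strictBJOrthogonal (hso : StronglyOrthRel b i) {j : Fin n} (hj : j ≠ i) :
    StrictBJOrthogonal (b i) (b j) := by
  intro t ht
  have hsum : ∑ k ∈ univ.erase i, (Pi.single j t : Fin n → ℝ) k • b k = t • b j := by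
    rw [Finset.sum_eq_single j (fun k _ hk => by simp [hk]) (by simp [hj])]
    simp
  simpa [hsum] using hso.2 (Pi.single j t) ⟨j, hj, by simpa using ht⟩

theorem StronglyOrthRel.exists_strictBJOrthogonal_sub_smul (hso : StronglyOrthRel b i)
    (hspan : Submodule.span ℝ (Set.range b) = ⊤) (f : X →ₗ[ℝ] ℝ) (hfi : f (b i) = 0)
    {u : X} (hfu : f u ≠ 0) : ∃ α : ℝ, StrictBJOrthogonal (b i) (u - α • b i) := by
  obtain ⟨d, hd⟩ :=
    (Submodule.mem_span_range_iff_exists_fun ℝ).mp (hspan ▸ Submodule.mem_top (x := u))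
  have hrest : ∑ k ∈ univ.erase i, d k • b k = u - d i • b i := by
    rw [eq_sub_iff_add_eq, ← hd]
    exact Finset.sum_erase_add _ _ (Finset.mem_univ i)
  have hcoef : ∃ j, j ≠ i ∧ d j ≠ 0 := by
    by_contra! hall
    rw [Finset.sum_eq_zero fun k hk => by rw [hall k (Finset.ne_of_mem_erase hk), zero_smul],
      eq_comm, sub_eq_zero] at hrest
    exact hfu (by rw [hrest, map_smul, hfi, smul_zero])
  refine ⟨d i, fun t ht => ?_⟩
  obtain ⟨j, hj, hdj⟩ := hcoef
  have key := hso.2 (t • d) ⟨j, hj, mul_ne_zero ht hdj⟩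
  simpa only [Pi.smul_apply, smul_eq_mul, mul_smul, ← Finset.smul_sum, hrest] using key

theorem exists_ne_apply_ne_zero_of_span_eq_top {ι M : Type*} [AddCommGroup M] [Module ℝ M]
    {b : ι → M} (hspan : Submodule.span ℝ (Set.range b) = ⊤) (f : M →ₗ[ℝ] ℝ) {i : ι}
    (hfi : f (b i) = 0) {u : M} (hfu : f u ≠ 0) : ∃ j, j ≠ i ∧ f (b j) ≠ 0 := by
  by_contra! hall
  have hker : Set.range b ⊆ LinearMap.ker f := by
    rintro _ ⟨j, rfl⟩
    by_cases hj : j = i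
    · exact hj ▸ hfi
    · exact hall j hj
  have := Submodule.span_le.mpr hker
  rw [hspan, top_le_iff] at this
  exact hfu (LinearMap.mem_ker.mp (this ▸ Submodule.mem_top))

end BirkhoffJames

theorem Orthonormal.stronglyOrthSet {E : Type*} [NormedAddCommGroup E] [InnerProductSpace ℝ E]
    {n : ℕ} {b : Fin n → E} (hb : Orthonormal ℝ b) : StronglyOrthSet b := by
  refine fun i => ⟨hb.1, fun c ⟨j, hj, hcj⟩ => ?_⟩
  set z := ∑ k ∈ univ.erase i, c k • b k
  have hperp : inner ℝ (b i) z = 0 := by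
    rw [inner_sum]
    refine Finset.sum_eq_zero fun k hk => ?_
    rw [real_inner_smul_right, hb.2 (Finset.ne_of_mem_erase hk).symm, mul_zero]
  have hz : z ≠ 0 := fun hz =>
    hcj (linearIndependent_iff'.mp hb.linearIndependent _ c hz j (by simpa using hj))
  have hsq : ‖b i‖ ^ 2 < ‖b i + z‖ ^ 2 := by
    rw [norm_add_sq_real, hperp]
    nlinarith [norm_pos_iff.mpr hz]
  exact lt_of_pow_lt_pow_left₀ 2 (norm_nonneg _) hsq

theorem exists_orthonormalBasis_apply_zero_eq {E : Type*} [NormedAddCommGroup E]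
    [InnerProductSpace ℝ E] [FiniteDimensional ℝ E] {n : ℕ} [NeZero n]
    (hE : Module.finrank ℝ E = n) {v : E} (hv : ‖v‖ = 1) : ∃ b : OrthonormalBasis (Fin n) ℝ E, b 0 = v := by
  have hsingle : Orthonormal ℝ (({0} : Set (Fin n)).domRestrict fun _ => v) :=
    orthonormal_subsingleton_iff.mpr fun _ => hv
  obtain ⟨b, hb⟩ := hsingle.exists_orthonormalBasis_extension_of_card_eq (by simpa using hE)
  exact ⟨b, hb 0 rfl⟩

theorem abs_add_add_abs_sub_of_abs_le {a b : ℝ} (h : |b| ≤ |a|) : |a + b| + |a - b| = 2 * |a| := by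
  have hb := abs_le.mp h
  rcases le_total 0 a with ha | ha
  · rw [abs_of_nonneg ha] at hb ⊢
    rw [abs_of_nonneg (by linarith), abs_of_nonneg (by linarith)]
    ring
  · rw [abs_of_nonpos ha] at hb ⊢
    rw [abs_of_nonpos (by linarith), abs_of_nonpos (by linarith)]
    ring

namespace PiLp

variable {ι : Type*} [Fintype ι]

theorem not_strictBJOrthogonal_of_L1 {x z : PiLp 1 (fun _ : ι => ℝ)}
    (hxz : ∀ k, x k = 0 → z k = 0) : ¬ StrictBJOrthogonal x z := by
  intro hstrict
  have hsmall : ∀ᶠ t in 𝓝 (0 : ℝ), ∀ k, |t * z k| ≤ |x k| := by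
    refine eventually_all.mpr fun k => ?_
    by_cases hk : x k = 0
    · simp [hk, hxz k hk]
    · have hlim : Tendsto (fun t : ℝ => |t * z k|) (𝓝 0) (𝓝 0) := by
        simpa using ((continuous_mul_const (z k)).abs.tendsto 0)
      exact hlim.eventually (eventually_le_nhds (abs_pos.mpr hk))
  obtain ⟨t, ht, ht0⟩ :=
    ((hsmall.filter_mono (nhdsWithin_le_nhds (s := {0}ᶜ))).and self_mem_nhdsWithin).exists
  have hsum : ‖x + t • z‖ + ‖x + (-t) • z‖ = 2 * ‖x‖ := by
    simp only [norm_eq_of_L1, add_apply, smul_apply, smul_eq_mul, Real.norm_eq_abs,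
      ← sum_add_distrib, mul_sum, neg_mul, ← sub_eq_add_neg]
    exact sum_congr rfl fun k _ => abs_add_add_abs_sub_of_abs_le (ht k)
  linarith [hstrict t ht0, hstrict (-t) (neg_ne_zero.mpr ht0)]

theorem sum_abs_rpow_mul_eq_zero_of_bjOrthogonal {p : ℝ≥0∞} [Fact (1 ≤ p)] (hp : 1 < p.toReal)
    {x y : PiLp p (fun _ : ι => ℝ)} (h : BJOrthogonal x y) :
    ∑ k, |x k| ^ (p.toReal - 2) * x k * y k = 0 := by
  set q := p.toReal
  have hq : 0 < q := by linarith
  have hnorm : ∀ z : PiLp p (fun _ : ι => ℝ), ‖z‖ ^ q = ∑ k, |z k| ^ q := fun z => by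
    rw [norm_eq_sum hq, ← Real.rpow_mul (by positivity), one_div, inv_mul_cancel₀ hq.ne',
      Real.rpow_one]
    rfl
  have hmin : IsLocalMin (fun t : ℝ => ∑ k, |x k + t * y k| ^ q) 0 := by
    refine Eventually.of_forall fun t => ?_
    have := Real.rpow_le_rpow (norm_nonneg _) (h t) hq.le
    simpa [hnorm] using this
  have hderiv : HasDerivAt (fun t : ℝ => ∑ k, |x k + t * y k| ^ q)
      (∑ k, q * (|x k| ^ (q - 2) * x k * y k)) 0 := by
    refine HasDerivAt.fun_sum fun k _ => ?_
    have hlin : HasDerivAt (fun t : ℝ => x k + t * y k) (y k) 0 := by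
      simpa using ((hasDerivAt_id (0 : ℝ)).mul_const (y k)).const_add (x k)
    have hcomp := (hasDerivAt_abs_rpow (x k + 0 * y k) hp).comp 0 hlin
    rw [zero_mul, add_zero] at hcomp
    exact hcomp.congr_deriv (by ring)
  have := hmin.hasDerivAt_eq_zero hderiv
  rw [← mul_sum] at this
  exact (mul_eq_zero.mp this).resolve_left hq.ne'

end PiLp

theorem eq_one_or_eq_top_or_one_lt_toReal {p : ℝ≥0∞} (hp : 1 ≤ p) :
    p = 1 ∨ p = ⊤ ∨ 1 < p.toReal := by
  rcases hp.eq_or_lt with h1 | h1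
  · exact .inl h1.symm
  rcases eq_or_ne p ⊤ with htop | htop
  · exact .inr (.inl htop)
  · exact .inr (.inr (by simpa using (ENNReal.toReal_lt_toReal one_ne_top htop).mpr h1))

section TwoOne

variable (p : ℝ≥0∞) (m : ℕ)

def twoOne : PiLp p (fun _ : Fin (m + 2) => ℝ) :=
  WithLp.toLp p (Fin.cons 2 (Fin.cons 1 0))

def twoOneAnnihilator : PiLp p (fun _ : Fin (m + 2) => ℝ) →ₗ[ℝ] ℝ :=
  PiLp.projₗ p (fun _ => ℝ) 0 - (2 : ℝ) • PiLp.projₗ p (fun _ => ℝ) 1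

variable {p m}

@[simp] theorem twoOne_zero : twoOne p m 0 = 2 := rfl

@[simp] theorem twoOne_one : twoOne p m 1 = 1 := rfl

theorem twoOneAnnihilator_apply (x : PiLp p (fun _ : Fin (m + 2) => ℝ)) :
    twoOneAnnihilator p m x = x 0 - 2 * x 1 := rfl

@[simp] theorem twoOneAnnihilator_twoOne : twoOneAnnihilator p m (twoOne p m) = 0 := by
  simp [twoOneAnnihilator_apply]

theorem abs_twoOne_succ_le_one (k : Fin (m + 1)) : |twoOne p m k.succ| ≤ 1 := by
  cases k using Fin.cases <;> simp [twoOne]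

theorem not_strictBJOrthogonal_twoOne_top (y : PiLp ∞ (fun _ : Fin (m + 2) => ℝ)) :
    ¬ StrictBJOrthogonal (twoOne ∞ m) y := by
  intro h
  rcases eq_or_ne y 0 with rfl | hy
  · simpa using h 1 one_ne_zero
  have hy' : 0 < ‖y‖ := norm_pos_iff.mpr hy
  set σ : ℝ := if 0 ≤ y 0 then -1 else 1
  have hσ : |σ| = 1 := by unfold σ; split_ifs <;> simp
  have hσy : σ * y 0 ≤ 0 := by unfold σ; split_ifs <;> linarith
  set t := σ / ‖y‖
  have ht : t ≠ 0 := div_ne_zero (abs_pos.mp (hσ ▸ one_pos)) hy'.ne'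
  have hty : ∀ k, |t * y k| ≤ 1 := fun k => by
    rw [abs_mul, abs_div, hσ, abs_norm, one_div_mul_eq_div, div_le_one hy']
    exact PiLp.norm_apply_le y k
  have hty0 : t * y 0 ≤ 0 := by
    rw [div_mul_eq_mul_div]
    exact div_nonpos_of_nonpos_of_nonneg hσy hy'.le
  refine (h t ht).not_ge ?_
  calc ‖twoOne ∞ m + t • y‖ ≤ 2 := by
        rw [PiLp.norm_eq_ciSup]
        refine ciSup_le fun k => ?_
        simp only [PiLp.add_apply, PiLp.smul_apply, smul_eq_mul, Real.norm_eq_abs]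
        cases k using Fin.cases with
        | zero =>
          rw [twoOne_zero, abs_le]
          constructor <;> linarith [abs_le.mp (hty 0)]
        | succ k =>
          linarith [abs_add_le (twoOne ∞ m k.succ) (t * y k.succ),
            abs_twoOne_succ_le_one (p := ∞) k, hty k.succ]
    _ ≤ ‖twoOne ∞ m‖ := by simpa using PiLp.norm_apply_le (twoOne ∞ m) 0

theorem toReal_eq_two_of_bjOrthogonal_twoOne [Fact (1 ≤ p)] (hp : 1 < p.toReal)
    {y : PiLp p (fun _ : Fin (m + 2) => ℝ)} (hwy : BJOrthogonal (twoOne p m) y)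
    (hyw : BJOrthogonal y (twoOne p m)) (hy : twoOneAnnihilator p m y ≠ 0) : p.toReal = 2 := by
  have h₁ := PiLp.sum_abs_rpow_mul_eq_zero_of_bjOrthogonal hp hwy
  have h₂ := PiLp.sum_abs_rpow_mul_eq_zero_of_bjOrthogonal hp hyw
  simp only [Fin.sum_univ_succ, twoOne, WithLp.ofLp_toLp, Fin.cons_zero, Fin.cons_succ,
    Fin.succ_zero_eq_one, Pi.zero_apply, abs_zero, mul_zero, zero_mul, sum_const_zero,
    add_zero] at h₁ h₂
  generalize p.toReal = q at hp h₁ h₂ ⊢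
  set r : ℝ := 2 ^ (q - 1) with hr
  have hr0 : 0 < r := by positivity
  have hy₁ : y 1 = -(r * y 0) := by
    have : (2 : ℝ) ^ (q - 2) * 2 = r := by rw [hr, ← Real.rpow_add_one two_ne_zero]; ring_nf
    rw [abs_two, this, abs_one, Real.one_rpow, one_mul] at h₁
    linarith
  have hy₀ : y 0 ≠ 0 := fun h0 => hy (by rw [twoOneAnnihilator_apply, hy₁, h0]; ring)
  have hg : |y 0| ^ (q - 2) * y 0 ≠ 0 := by positivity
  have habs : |y 1| ^ (q - 2) * y 1 = -(r ^ (q - 1) * (|y 0| ^ (q - 2) * y 0)) := by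
    rw [hy₁, abs_neg, abs_mul, abs_of_pos hr0, Real.mul_rpow hr0.le (abs_nonneg _),
      show q - 2 = (q - 1) - 1 by ring, Real.rpow_sub_one hr0.ne']
    field_simp
  have hr2 : r ^ (q - 1) = 2 ^ (1 : ℝ) := by
    rw [Real.rpow_one]
    apply mul_right_cancel₀ hg
    rw [mul_one] at h₂
    linarith
  rw [hr, ← Real.rpow_mul zero_le_two, Real.rpow_right_inj two_pos (by norm_num)] at hr2
  nlinarith

theorem eq_two_of_stronglyOrthSet_of_apply_eq_smul_twoOne [Fact (1 ≤ p)] {n : ℕ}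
    {b : Fin n → PiLp p (fun _ : Fin (m + 2) => ℝ)} (hspan : Submodule.span ℝ (Set.range b) = ⊤)
    (hso : StronglyOrthSet b) {i : Fin n} {c : ℝ} (hc : c ≠ 0) (hbi : b i = c • twoOne p m) :
    p = 2 := by
  set e : PiLp p (fun _ : Fin (m + 2) => ℝ) := WithLp.toLp p (Pi.single 0 1)
  have hfi : twoOneAnnihilator p m (b i) = 0 := by simp [hbi]
  have hfe : twoOneAnnihilator p m e ≠ 0 := by simp [e, twoOneAnnihilator_apply]
  obtain ⟨j, hji, hfj⟩ := exists_ne_apply_ne_zero_of_span_eq_top hspan _ hfi hfe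
  have hwj : StrictBJOrthogonal (twoOne p m) (b j) :=
    (hbi ▸ (hso i).strictBJOrthogonal hji).of_smul_left hc
  obtain rfl | rfl | hp := eq_one_or_eq_top_or_one_lt_toReal (Fact.out : 1 ≤ p)
  · obtain ⟨α, hα⟩ := (hso i).exists_strictBJOrthogonal_sub_smul hspan _ hfi hfe
    rw [hbi, smul_smul] at hα
    refine absurd (hα.of_smul_left hc) (PiLp.not_strictBJOrthogonal_of_L1 fun k hk => ?_)
    have hk0 : k ≠ 0 := by rintro rfl; simp at hk
    simp [e, hk, hk0]
  · exact absurd hwj (not_strictBJOrthogonal_twoOne_top _)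
  · have hjw : BJOrthogonal (b j) (twoOne p m) :=
      (hbi ▸ ((hso j).strictBJOrthogonal hji.symm).bjOrthogonal).of_smul_right hc
    have h2 := toReal_eq_two_of_bjOrthogonal_twoOne hp hwj.bjOrthogonal hjw hfj
    have htop : p ≠ ⊤ := (ENNReal.toReal_pos_iff.mp (by linarith)).2.ne
    exact (ENNReal.toReal_eq_toReal_iff' htop ofNat_ne_top).mp (by simpa using h2)

end TwoOne

open scoped ENNReal in
theorem stmt_9 (m : ℕ) (p : ℝ≥0∞) [Fact (1 ≤ p)] :
    (∀ v : PiLp p (fun _ : Fin (m + 2) => ℝ), ‖v‖ = 1 →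
      ∃ b : Fin (m + 2) → PiLp p (fun _ : Fin (m + 2) => ℝ),
        LinearIndependent ℝ b ∧ Submodule.span ℝ (Set.range b) = ⊤ ∧
        StronglyOrthSet b ∧ ∃ i, b i = v) ↔ p = 2 := by
  constructor
  · intro h
    have hw : twoOne p m ≠ 0 := fun hw => two_ne_zero (congrArg (· 0) hw : twoOne p m 0 = 0)
    obtain ⟨b, -, hspan, hso, i, hbi⟩ := h _ (norm_smul_inv_norm (𝕜 := ℝ) hw)
    exact eq_two_of_stronglyOrthSet_of_apply_eq_smul_twoOne hspan hso
      (inv_ne_zero (norm_ne_zero_iff.mpr hw)) hbi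
  · rintro rfl v hv
    obtain ⟨b, hb⟩ := exists_orthonormalBasis_apply_zero_eq finrank_euclideanSpace_fin hv
    exact ⟨b, b.orthonormal.linearIndependent, by simpa using b.toBasis.span_eq,
      b.orthonormal.stronglyOrthSet, 0, hb⟩
end

section
/- Let X be a real normed linear space of finite dimension n, and let {x_1, ..., x_n} be a strongly orthonormal Hamel basis of X in the sense of Birkhoff-James. Then each x_i is an extreme point of the closed unit ball of X. -/
/-!
The coordinate functional `f` of `x i` with respect to the basis `x` satisfies `|f v| < ‖v‖`
unless `v` is a multiple of `x i`: strong orthonormality at `i`, rescaled by `f v`, says exactly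
this. Hence `f ≤ 1` on the unit ball with equality only at `x i`, so `x i` is an exposed, and in
particular an extreme, point of the ball.
-/

open Finset Metric

section

variable {X : Type*} [NormedAddCommGroup X] [NormedSpace ℝ X]

theorem mem_exposedPoints_closedBall_of_abs_lt_norm {x₀ : X} (l : StrongDual ℝ X)
    (hx₀ : ‖x₀‖ = 1) (hl : l x₀ = 1) (h : ∀ v, v ≠ l v • x₀ → |l v| < ‖v‖) :
    x₀ ∈ (closedBall (0 : X) 1).exposedPoints ℝ := by
  have abs_le_norm (v : X) : |l v| ≤ ‖v‖ := by
    by_cases hv : v = l v • x₀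
    · conv_rhs => rw [hv, norm_smul, hx₀, mul_one, Real.norm_eq_abs]
    · exact (h v hv).le
  refine ⟨by simp [hx₀], l, fun y hy => ?_⟩
  rw [mem_closedBall_zero_iff] at hy
  have hly : l y ≤ 1 := (le_abs_self _).trans ((abs_le_norm y).trans hy)
  refine ⟨hl ▸ hly, fun hle => ?_⟩
  have hly1 : l y = 1 := le_antisymm hly (hl ▸ hle)
  by_contra hne
  have := h y (by rwa [hly1, one_smul])
  rw [hly1, abs_one] at this
  linarith

variable {n : ℕ} {x : Fin n → X} {i : Fin n}

theorem StronglyOrthRel.abs_lt_norm_smul_add_sum (hx : StronglyOrthRel x i) (t : ℝ)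
    (c : Fin n → ℝ) (hc : ∃ j, j ≠ i ∧ c j ≠ 0) :
    |t| < ‖t • x i + ∑ j ∈ univ.erase i, c j • x j‖ := by
  rcases eq_or_ne t 0 with rfl | ht
  · rw [abs_zero, zero_smul, zero_add, norm_pos_iff]
    intro hsum
    simpa [hsum] using hx.2 c hc
  · have hc' : ∃ j, j ≠ i ∧ t⁻¹ * c j ≠ 0 := by
      obtain ⟨j, hji, hcj⟩ := hc
      exact ⟨j, hji, mul_ne_zero (inv_ne_zero ht) hcj⟩
    have hrescale : t • x i + ∑ j ∈ univ.erase i, c j • x j =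
        t • (x i + ∑ j ∈ univ.erase i, (t⁻¹ * c j) • x j) := by
      simp only [smul_add, smul_sum, smul_smul, mul_inv_cancel_left₀ ht]
    have hgt := hx.2 _ hc'
    rw [hx.1 i] at hgt
    rw [hrescale, norm_smul, Real.norm_eq_abs]
    exact lt_mul_of_one_lt_right (abs_pos.2 ht) hgt

theorem StronglyOrthRel.abs_coord_lt_norm (hx : StronglyOrthRel x i)
    (B : Module.Basis (Fin n) ℝ X) (hB : ⇑B = x) (v : X) (hv : v ≠ B.coord i v • x i) :
    |B.coord i v| < ‖v‖ := by
  rw [Module.Basis.coord_apply] at hv ⊢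
  have hsum : v = B.repr v i • x i + ∑ j ∈ univ.erase i, B.repr v j • x j := by
    conv_lhs => rw [← B.sum_repr v]
    rw [hB, ← add_sum_erase _ _ (mem_univ i)]
  have hoff : ∃ j, j ≠ i ∧ B.repr v j ≠ 0 := by
    by_contra! hzero
    refine hv ?_
    rwa [sum_eq_zero fun j hj => by rw [hzero j (ne_of_mem_erase hj), zero_smul], add_zero] at hsum
  simpa only [← hsum] using hx.abs_lt_norm_smul_add_sum (B.repr v i) _ hoff

end

theorem stmt_10_general {X : Type*} [NormedAddCommGroup X] [NormedSpace ℝ X] {n : ℕ}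
    (x : Fin n → X)
    (hli : LinearIndependent ℝ x) (hsp : Submodule.span ℝ (Set.range x) = ⊤)
    (hso : StronglyOrthSet x) (i : Fin n) :
    x i ∈ Set.extremePoints ℝ (Metric.closedBall (0 : X) 1) := by
  let B : Module.Basis (Fin n) ℝ X := .mk hli hsp.ge
  have hB : ⇑B = x := Module.Basis.coe_mk hli hsp.ge
  have : FiniteDimensional ℝ X := .of_basis B
  apply exposedPoints_subset_extremePoints
  refine mem_exposedPoints_closedBall_of_abs_lt_norm (B.coord i).toContinuousLinearMap
    ((hso i).1 i) ?_ ((hso i).abs_coord_lt_norm B hB)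
  simp [← hB]

theorem stmt_10 {X : Type*} [NormedAddCommGroup X] [NormedSpace ℝ X] {n : ℕ}
    (hdim : Module.finrank ℝ X = n) (x : Fin n → X)
    (hli : LinearIndependent ℝ x) (hsp : Submodule.span ℝ (Set.range x) = ⊤)
    (hso : StronglyOrthSet x) (i : Fin n) :
    x i ∈ Set.extremePoints ℝ (Metric.closedBall (0 : X) 1) :=
  stmt_10_general x hli hsp hso i
end

section
/- In the real normed linear space (ℝ³, ‖·‖_3), the set S = { 2^{-1/3}(1,1,0), 4^{-1/3}(1,-1,2^{1/3}), 4^{-1/3}(1,-1,-2^{1/3}) } is a strongly orthonormal Hamel basis in the sense of Birkhoff-James, but the zero vector θ is NOT the best coapproximation to 4^{-1/3}(1,-1,2^{1/3}) out of span{ 2^{-1/3}(1,1,0), 4^{-1/3}(1,-1,-2^{1/3}) }; that is, there exists g ∈ span{ 2^{-1/3}(1,1,0), 4^{-1/3}(1,-1,-2^{1/3}) } with ‖g‖_3 > ‖4^{-1/3}(1,-1,2^{1/3}) - g‖_3. -/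
open scoped ENNReal

instance : Fact ((1 : ℝ≥0∞) ≤ 3) := ⟨by norm_num⟩

/-- The vector `(a, b, c)` viewed as an element of `(ℝ³, ‖·‖₃)`. -/
noncomputable def vec3 (a b c : ℝ) : PiLp 3 (fun _ : Fin 3 => ℝ) :=
  (WithLp.equiv 3 (Fin 3 → ℝ)).symm ![a, b, c]

/-!
With `a = 2^{-1/3}` and `b = 4^{-1/3}` (so `2a³ = 1`, `2b³ = a³`) the three vectors are
`x₀ = (a, a, 0)`, `x₁ = (b, -b, a)`, `x₂ = (b, -b, -a)`. A combination of them has the form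
`(t + s, t - s, z)`, whose norm cubed is `|t + s|³ + |t - s|³ + |z|³`, and
`|t + s|³ + |t - s|³ ≥ |(t + s)³ + (t - s)³| = 2|t|³ + 6|t|s²`. This strict convexity gives every
Birkhoff-James inequality; strong orthonormality forces linear independence, hence a basis.
For `g = 2x₀ + x₂` one has `x₁ - g = 2a(-1, -1, 1)`, so `‖x₁ - g‖³ = 24a³`, while
`‖g‖³ ≥ 17a³ + 12ab² > 24a³` because `12b² > 7a²`.
-/

lemma vec3_add (x y z x' y' z' : ℝ) :
    vec3 x y z + vec3 x' y' z' = vec3 (x + x') (y + y') (z + z') := by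
  ext i; fin_cases i <;> rfl

lemma vec3_sub (x y z x' y' z' : ℝ) :
    vec3 x y z - vec3 x' y' z' = vec3 (x - x') (y - y') (z - z') := by
  ext i; fin_cases i <;> rfl

lemma smul_vec3 (r x y z : ℝ) : r • vec3 x y z = vec3 (r * x) (r * y) (r * z) := by
  ext i; fin_cases i <;> rfl

lemma norm_vec3_pow_three (x y z : ℝ) : ‖vec3 x y z‖ ^ 3 = |x| ^ 3 + |y| ^ 3 + |z| ^ 3 := by
  rw [PiLp.norm_eq_sum (by norm_num), ← Real.rpow_natCast, ← Real.rpow_mul (by positivity)]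
  norm_num [Fin.sum_univ_three, vec3, Matrix.cons_val_two]

lemma one_lt_norm_vec3 {x y z : ℝ} (h : 1 < |x| ^ 3 + |y| ^ 3 + |z| ^ 3) : 1 < ‖vec3 x y z‖ := by
  rwa [← one_lt_pow_iff_of_nonneg (norm_nonneg _) three_ne_zero, norm_vec3_pow_three]

lemma norm_vec3_lt_norm_vec3 {x y z x' y' z' : ℝ}
    (h : |x| ^ 3 + |y| ^ 3 + |z| ^ 3 < |x'| ^ 3 + |y'| ^ 3 + |z'| ^ 3) :
    ‖vec3 x y z‖ < ‖vec3 x' y' z'‖ := by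
  rwa [← pow_lt_pow_iff_left₀ (norm_nonneg _) (norm_nonneg _) three_ne_zero,
    norm_vec3_pow_three, norm_vec3_pow_three]

lemma two_mul_abs_pow_three_add_le (t s : ℝ) :
    2 * |t| ^ 3 + 6 * |t| * s ^ 2 ≤ |t + s| ^ 3 + |t - s| ^ 3 := by
  calc 2 * |t| ^ 3 + 6 * |t| * s ^ 2 = |(t + s) ^ 3 + (t - s) ^ 3| := by
        rw [show (t + s) ^ 3 + (t - s) ^ 3 = t * (2 * t ^ 2 + 6 * s ^ 2) by ring, abs_mul,
          abs_of_nonneg (by positivity : 0 ≤ 2 * t ^ 2 + 6 * s ^ 2), ← sq_abs t]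
        ring
    _ ≤ |t + s| ^ 3 + |t - s| ^ 3 := by
        rw [← abs_pow, ← abs_pow]; exact abs_add_le _ _

lemma two_mul_abs_pow_three_le (t s : ℝ) : 2 * |t| ^ 3 ≤ |t + s| ^ 3 + |t - s| ^ 3 := by
  nlinarith [two_mul_abs_pow_three_add_le t s, abs_nonneg t, sq_nonneg s]

lemma two_mul_abs_pow_three_lt {t s : ℝ} (hs : s ≠ 0) :
    2 * |t| ^ 3 < |t + s| ^ 3 + |t - s| ^ 3 := by
  rcases eq_or_ne t 0 with rfl | ht
  · have := pow_pos (abs_pos.mpr hs) 3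
    simp only [abs_zero, zero_add, zero_sub, abs_neg]
    linarith
  · have := mul_pos (abs_pos.mpr ht) (pow_pos (abs_pos.mpr hs) 2)
    rw [sq_abs] at this
    linarith [two_mul_abs_pow_three_add_le t s]

lemma two_mul_abs_pow_three_le' (t s : ℝ) : 2 * |s| ^ 3 ≤ |t + s| ^ 3 + |t - s| ^ 3 := by
  simpa only [add_comm s, abs_sub_comm s, add_comm (|t - s| ^ 3)] using
    two_mul_abs_pow_three_le s t

lemma two_mul_abs_pow_three_lt' {t : ℝ} (s : ℝ) (ht : t ≠ 0) :
    2 * |s| ^ 3 < |t + s| ^ 3 + |t - s| ^ 3 := by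
  simpa only [add_comm s, abs_sub_comm s, add_comm (|t - s| ^ 3)] using
    two_mul_abs_pow_three_lt (t := s) ht

lemma StronglyOrthSet.linearIndependent {X : Type*} [NormedAddCommGroup X] [NormedSpace ℝ X]
    {n : ℕ} {x : Fin n → X} (hx : StronglyOrthSet x) : LinearIndependent ℝ x := by
  rw [Fintype.linearIndependent_iff]
  intro g hg i
  by_contra hgi
  obtain ⟨hunit, hlt⟩ := hx i
  have hcomb : x i + ∑ j ∈ Finset.univ.erase i, (g j / g i) • x j = 0 := by
    calc x i + ∑ j ∈ Finset.univ.erase i, (g j / g i) • x j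
        = (g i)⁻¹ • ∑ j, g j • x j := by
          rw [← Finset.add_sum_erase _ _ (Finset.mem_univ i), smul_add, smul_smul,
            inv_mul_cancel₀ hgi, one_smul, Finset.smul_sum]
          simp only [smul_smul, div_eq_inv_mul]
      _ = 0 := by rw [hg, smul_zero]
  by_cases hc : ∃ j, j ≠ i ∧ g j / g i ≠ 0
  · have := hlt _ hc
    rw [hcomb, norm_zero, hunit i] at this
    exact absurd this (by norm_num)
  · push Not at hc
    have hsum : ∑ j ∈ Finset.univ.erase i, (g j / g i) • x j = 0 :=
      Finset.sum_eq_zero fun j hj => by rw [hc j (Finset.ne_of_mem_erase hj), zero_smul]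
    rw [hsum, add_zero] at hcomb
    simpa [hcomb] using hunit i

lemma stronglyOrthRel_of_erase_eq_pair {X : Type*} [NormedAddCommGroup X] [NormedSpace ℝ X]
    {n : ℕ} {x : Fin n → X} {i j k : Fin n} (hjk : j ≠ k)
    (herase : Finset.univ.erase i = {j, k}) (hunit : ∀ i, ‖x i‖ = 1)
    (h : ∀ l m : ℝ, l ≠ 0 ∨ m ≠ 0 → 1 < ‖x i + l • x j + m • x k‖) :
    StronglyOrthRel x i := by
  refine ⟨hunit, fun c ⟨p, hpi, hcp⟩ => ?_⟩
  rw [herase, Finset.sum_pair hjk, hunit i, ← add_assoc]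
  have hp : p ∈ ({j, k} : Finset (Fin n)) :=
    herase ▸ Finset.mem_erase.mpr ⟨hpi, Finset.mem_univ p⟩
  rcases Finset.mem_insert.mp hp with rfl | hp
  · exact h _ _ (Or.inl hcp)
  · rw [Finset.mem_singleton.mp hp] at hcp
    exact h _ _ (Or.inr hcp)

lemma one_lt_norm_vec3_add_sub {a s z : ℝ} (ha : 0 ≤ a) (ha3 : 2 * a ^ 3 = 1)
    (hsz : s ≠ 0 ∨ z ≠ 0) : 1 < ‖vec3 (a + s) (a - s) z‖ := by
  apply one_lt_norm_vec3
  have h2a : 2 * |a| ^ 3 = 1 := by rw [abs_of_nonneg ha, ha3]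
  rcases hsz with hs | hz
  · linarith [two_mul_abs_pow_three_lt (t := a) hs, pow_nonneg (abs_nonneg z) 3]
  · linarith [two_mul_abs_pow_three_le a s, pow_pos (abs_pos.mpr hz) 3]

lemma one_lt_norm_vec3_add_one_add {a b t m z : ℝ} (hb : 0 ≤ b)
    (ha3 : 2 * a ^ 3 = 1) (hab : 2 * b ^ 3 = a ^ 3) (hz : |z| = |1 - m| * a)
    (htm : t ≠ 0 ∨ m ≠ 0) : 1 < ‖vec3 (t + (1 + m) * b) (t - (1 + m) * b) z‖ := by
  apply one_lt_norm_vec3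
  have hzb : |z| ^ 3 = |1 - m| ^ 3 * a ^ 3 := by rw [hz, mul_pow]
  have hsb : 2 * |(1 + m) * b| ^ 3 = |1 + m| ^ 3 * a ^ 3 := by
    rw [abs_mul, mul_pow, abs_of_nonneg hb, ← hab]; ring
  have ha3pos : 0 < a ^ 3 := by linarith
  rcases htm with ht | hm
  · have hmid : 2 * a ^ 3 ≤ (|1 + m| ^ 3 + |1 - m| ^ 3) * a ^ 3 := by
      have := two_mul_abs_pow_three_le 1 m
      rw [abs_one, one_pow] at this
      nlinarith
    linarith [two_mul_abs_pow_three_lt' ((1 + m) * b) ht]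
  · have hmid : 2 * a ^ 3 < (|1 + m| ^ 3 + |1 - m| ^ 3) * a ^ 3 := by
      have := two_mul_abs_pow_three_lt (t := 1) hm
      rw [abs_one, one_pow] at this
      nlinarith
    linarith [two_mul_abs_pow_three_le' t ((1 + m) * b)]

lemma norm_vec3_family_eq_one {a b : ℝ} (ha : 0 < a) (hb : 0 < b) (ha3 : 2 * a ^ 3 = 1)
    (hab : 2 * b ^ 3 = a ^ 3) (i : Fin 3) :
    ‖![vec3 a a 0, vec3 b (-b) a, vec3 b (-b) (-a)] i‖ = 1 := by
  rw [← pow_left_inj₀ (norm_nonneg _) zero_le_one three_ne_zero, one_pow]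
  fin_cases i <;> simp [norm_vec3_pow_three, abs_of_pos ha, abs_of_pos hb] <;> linarith

lemma stronglyOrthSet_vec3 {a b : ℝ} (ha : 0 < a) (hb : 0 < b) (ha3 : 2 * a ^ 3 = 1)
    (hab : 2 * b ^ 3 = a ^ 3) :
    StronglyOrthSet ![vec3 a a 0, vec3 b (-b) a, vec3 b (-b) (-a)] := by
  have hunit := norm_vec3_family_eq_one ha hb ha3 hab
  intro i
  fin_cases i
  · refine stronglyOrthRel_of_erase_eq_pair (j := 1) (k := 2) (by decide) (by decide) hunit
      fun l m hlm => ?_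
    show 1 < ‖vec3 a a 0 + l • vec3 b (-b) a + m • vec3 b (-b) (-a)‖
    have hcomb : vec3 a a 0 + l • vec3 b (-b) a + m • vec3 b (-b) (-a)
        = vec3 (a + (l + m) * b) (a - (l + m) * b) ((l - m) * a) := by
      simp only [smul_vec3, vec3_add]; congr 1 <;> ring
    rw [hcomb]
    refine one_lt_norm_vec3_add_sub ha.le ha3 ?_
    contrapose! hlm
    have hsum := (mul_eq_zero.mp hlm.1).resolve_right hb.ne'
    have hdiff := (mul_eq_zero.mp hlm.2).resolve_right ha.ne'
    constructor <;> linarith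
  · refine stronglyOrthRel_of_erase_eq_pair (j := 0) (k := 2) (by decide) (by decide) hunit
      fun l m hlm => ?_
    show 1 < ‖vec3 b (-b) a + l • vec3 a a 0 + m • vec3 b (-b) (-a)‖
    have hcomb : vec3 b (-b) a + l • vec3 a a 0 + m • vec3 b (-b) (-a)
        = vec3 (l * a + (1 + m) * b) (l * a - (1 + m) * b) ((1 - m) * a) := by
      simp only [smul_vec3, vec3_add]; congr 1 <;> ring
    rw [hcomb]
    refine one_lt_norm_vec3_add_one_add hb.le ha3 hab ?_ ?_
    · rw [abs_mul, abs_of_pos ha]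
    · simpa [ha.ne'] using hlm
  · refine stronglyOrthRel_of_erase_eq_pair (j := 0) (k := 1) (by decide) (by decide) hunit
      fun l m hlm => ?_
    show 1 < ‖vec3 b (-b) (-a) + l • vec3 a a 0 + m • vec3 b (-b) a‖
    have hcomb : vec3 b (-b) (-a) + l • vec3 a a 0 + m • vec3 b (-b) a
        = vec3 (l * a + (1 + m) * b) (l * a - (1 + m) * b) (-((1 - m) * a)) := by
      simp only [smul_vec3, vec3_add]; congr 1 <;> ring
    rw [hcomb]
    refine one_lt_norm_vec3_add_one_add hb.le ha3 hab ?_ ?_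
    · rw [abs_neg, abs_mul, abs_of_pos ha]
    · simpa [ha.ne'] using hlm

lemma norm_sub_lt_norm_vec3 {a b : ℝ} (ha : 0 < a) (hb : 0 < b) (hab : 2 * b ^ 3 = a ^ 3) :
    ‖vec3 b (-b) a - ((2 : ℝ) • vec3 a a 0 + vec3 b (-b) (-a))‖ <
      ‖(2 : ℝ) • vec3 a a 0 + vec3 b (-b) (-a)‖ := by
  have hg : (2 : ℝ) • vec3 a a 0 + vec3 b (-b) (-a) = vec3 (2 * a + b) (2 * a - b) (-a) := by
    simp only [smul_vec3, vec3_add]; congr 1; ring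
  rw [hg, vec3_sub]
  apply norm_vec3_lt_norm_vec3
  rw [show b - (2 * a + b) = -(2 * a) by ring, show -b - (2 * a - b) = -(2 * a) by ring,
    show a - -a = 2 * a by ring, abs_neg, abs_neg, abs_of_pos ha]
  have hlow := two_mul_abs_pow_three_add_le (2 * a) b
  rw [abs_of_pos (by positivity)] at hlow ⊢
  have hba : 7 * a ^ 2 < 12 * b ^ 2 := by
    -- otherwise `6a³ = 12b³ ≤ 7a²b` gives `6a ≤ 7b`, so `36a² ≤ 49b² ≤ (343/12)a²`
    by_contra! h
    have h67 : 6 * a ≤ 7 * b :=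
      le_of_mul_le_mul_left (by nlinarith [mul_le_mul_of_nonneg_right h hb.le]) (pow_pos ha 2)
    nlinarith [mul_le_mul h67 h67 (by positivity) (by positivity)]
  nlinarith [mul_lt_mul_of_pos_left hba ha]

lemma rpow_pow_three {x : ℝ} (hx : 0 ≤ x) (r : ℝ) : (x ^ r) ^ 3 = x ^ (r * 3) := by
  exact_mod_cast (Real.rpow_mul_natCast hx r 3).symm

lemma two_mul_two_rpow_neg_third_pow_three : 2 * ((2 : ℝ) ^ (-(1 / 3) : ℝ)) ^ 3 = 1 := by
  rw [rpow_pow_three zero_le_two]; norm_num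

lemma two_mul_four_rpow_neg_third_pow_three :
    2 * ((4 : ℝ) ^ (-(1 / 3) : ℝ)) ^ 3 = ((2 : ℝ) ^ (-(1 / 3) : ℝ)) ^ 3 := by
  rw [rpow_pow_three zero_le_four, rpow_pow_three zero_le_two]; norm_num

lemma four_rpow_neg_third_mul_two_rpow_third :
    (4 : ℝ) ^ (-(1 / 3) : ℝ) * (2 : ℝ) ^ ((1 : ℝ) / 3) = (2 : ℝ) ^ (-(1 / 3) : ℝ) := by
  rw [show (4 : ℝ) = 2 ^ (2 : ℝ) by norm_num, ← Real.rpow_mul zero_le_two,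
    ← Real.rpow_add two_pos]
  norm_num

theorem stmt_13 :
    (LinearIndependent ℝ
        ![(2 : ℝ) ^ (-(1 / 3) : ℝ) • vec3 1 1 0,
          (4 : ℝ) ^ (-(1 / 3) : ℝ) • vec3 1 (-1) ((2 : ℝ) ^ ((1 : ℝ) / 3)),
          (4 : ℝ) ^ (-(1 / 3) : ℝ) • vec3 1 (-1) (-(2 : ℝ) ^ ((1 : ℝ) / 3))] ∧
      Submodule.span ℝ (Set.range
        ![(2 : ℝ) ^ (-(1 / 3) : ℝ) • vec3 1 1 0,
          (4 : ℝ) ^ (-(1 / 3) : ℝ) • vec3 1 (-1) ((2 : ℝ) ^ ((1 : ℝ) / 3)),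
          (4 : ℝ) ^ (-(1 / 3) : ℝ) • vec3 1 (-1) (-(2 : ℝ) ^ ((1 : ℝ) / 3))]) = ⊤ ∧
      StronglyOrthSet
        ![(2 : ℝ) ^ (-(1 / 3) : ℝ) • vec3 1 1 0,
          (4 : ℝ) ^ (-(1 / 3) : ℝ) • vec3 1 (-1) ((2 : ℝ) ^ ((1 : ℝ) / 3)),
          (4 : ℝ) ^ (-(1 / 3) : ℝ) • vec3 1 (-1) (-(2 : ℝ) ^ ((1 : ℝ) / 3))]) ∧
    ∃ g ∈ Submodule.span ℝ
        ({(2 : ℝ) ^ (-(1 / 3) : ℝ) • vec3 1 1 0,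
          (4 : ℝ) ^ (-(1 / 3) : ℝ) • vec3 1 (-1) (-(2 : ℝ) ^ ((1 : ℝ) / 3))} :
          Set (PiLp 3 (fun _ : Fin 3 => ℝ))),
      ‖(4 : ℝ) ^ (-(1 / 3) : ℝ) • vec3 1 (-1) ((2 : ℝ) ^ ((1 : ℝ) / 3)) - g‖ < ‖g‖ := by
  have ha : 0 < (2 : ℝ) ^ (-(1 / 3) : ℝ) := by positivity
  have hb : 0 < (4 : ℝ) ^ (-(1 / 3) : ℝ) := by positivity
  have hab := two_mul_four_rpow_neg_third_pow_three
  simp only [smul_vec3, mul_one, mul_zero, mul_neg, four_rpow_neg_third_mul_two_rpow_third]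
  have hS := stronglyOrthSet_vec3 ha hb two_mul_two_rpow_neg_third_pow_three hab
  refine ⟨⟨hS.linearIndependent, hS.linearIndependent.span_eq_top_of_card_eq_finrank ?_, hS⟩,
    _, ?_, norm_sub_lt_norm_vec3 ha hb hab⟩
  · rw [Module.finrank_eq_card_basis (PiLp.basisFun 3 ℝ (Fin 3))]
  · exact Submodule.add_mem _
      (Submodule.smul_mem _ _ (Submodule.subset_span (Set.mem_insert _ _)))
      (Submodule.subset_span (Set.mem_insert_of_mem _ rfl))
end

section
/- In the real normed linear space (ℝ⁴, ‖·‖_∞), the set S = { (1,1,1,1), (1,1,-1,-1), (1,-1,-1,1), (1,-1,1,-1) } is a strongly orthonormal Hamel basis in the sense of Birkhoff-James, but the zero vector θ is NOT the best coapproximation to (1,-1,-1,1) out of span{ (1,1,1,1), (1,1,-1,-1), (1,-1,1,-1) }; that is, there exists g ∈ span{ (1,1,1,1), (1,1,-1,-1), (1,-1,1,-1) } with ‖g‖_∞ > ‖(1,-1,-1,1) - g‖_∞. -/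
/-- The vector `(a, b, c, d)` viewed as an element of `(ℝ⁴, ‖·‖_∞)`. -/
def vec4 (a b c d : ℝ) : PiLp ⊤ (fun _ : Fin 4 => ℝ) :=
  (WithLp.equiv ⊤ (Fin 4 → ℝ)).symm ![a, b, c, d]

section Hadamard

variable {ι κ : Type*} [Fintype ι] [Fintype κ]

def IsHadamardFamily (x : κ → PiLp ⊤ (fun _ : ι => ℝ)) : Prop :=
  (∀ i k, |x i k| = 1) ∧ Pairwise fun i j => ∑ k, x i k * x j k = 0

lemma PiLp.sum_sq_apply_le_card_mul_norm_sq (v : PiLp ⊤ (fun _ : ι => ℝ)) :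
    ∑ k, v k ^ 2 ≤ Fintype.card ι * ‖v‖ ^ 2 := by
  calc ∑ k, v k ^ 2 ≤ ∑ _k : ι, ‖v‖ ^ 2 := by
        refine Finset.sum_le_sum fun k _ => ?_
        rw [← sq_abs]
        gcongr
        simpa using PiLp.norm_apply_le v k
    _ = Fintype.card ι * ‖v‖ ^ 2 := by simp

namespace IsHadamardFamily

section

variable {x : κ → PiLp ⊤ (fun _ : ι => ℝ)} (hx : IsHadamardFamily x)
include hx

omit [Fintype κ] in
lemma sum_mul_apply [DecidableEq κ] (i j : κ) :
    ∑ k, x i k * x j k = if i = j then (Fintype.card ι : ℝ) else 0 := by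
  split_ifs with h
  · subst h
    simp [← sq, ← sq_abs, hx.1]
  · exact hx.2 h

lemma sum_sq_apply_sum_smul [DecidableEq κ] (c : κ → ℝ) :
    ∑ k, (∑ j, c j • x j) k ^ 2 = Fintype.card ι * ∑ j, c j ^ 2 := by
  calc ∑ k, (∑ j, c j • x j) k ^ 2
      = ∑ i, ∑ j, c i * c j * ∑ k, x i k * x j k := by
        simp only [WithLp.ofLp_sum, WithLp.ofLp_smul, Finset.sum_apply, Pi.smul_apply,
          smul_eq_mul]
        simp only [sq, Finset.sum_mul_sum]
        simp only [Finset.mul_sum]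
        rw [Finset.sum_comm]
        refine Finset.sum_congr rfl fun i _ => ?_
        rw [Finset.sum_comm]
        exact Finset.sum_congr rfl fun j _ => Finset.sum_congr rfl fun k _ => by ring
    _ = Fintype.card ι * ∑ j, c j ^ 2 := by
        simp [hx.sum_mul_apply, Finset.mul_sum, sq, mul_comm]

lemma sum_sq_le_norm_sq [Nonempty ι] (c : κ → ℝ) :
    ∑ j, c j ^ 2 ≤ ‖∑ j, c j • x j‖ ^ 2 := by
  classical
  have hcard : (0 : ℝ) < Fintype.card ι := by exact_mod_cast Fintype.card_pos
  refine le_of_mul_le_mul_left ?_ hcard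
  rw [← hx.sum_sq_apply_sum_smul]
  exact PiLp.sum_sq_apply_le_card_mul_norm_sq _

omit [Fintype κ] in
lemma norm_eq_one [Nonempty ι] (i : κ) : ‖x i‖ = 1 := by
  refine le_antisymm ?_ ?_
  · rw [← PiLp.norm_ofLp, pi_norm_le_iff_of_nonneg zero_le_one]
    exact fun k => (hx.1 i k).le
  · obtain ⟨k⟩ := ‹Nonempty ι›
    simpa [hx.1 i k] using PiLp.norm_apply_le (x i) k

lemma linearIndependent [Nonempty ι] : LinearIndependent ℝ x := by
  refine Fintype.linearIndependent_iff.2 fun c hc i => ?_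
  have hsum : ∑ j, c j ^ 2 ≤ 0 := by simpa [hc] using hx.sum_sq_le_norm_sq c
  exact pow_eq_zero_iff two_ne_zero |>.1 <|
    (Finset.sum_eq_zero_iff_of_nonneg fun j _ => sq_nonneg (c j)).1
      (le_antisymm hsum (by positivity)) i (Finset.mem_univ i)

lemma span_eq_top [Nonempty ι] (hcard : Fintype.card κ = Fintype.card ι) :
    Submodule.span ℝ (Set.range x) = ⊤ := by
  refine hx.linearIndependent.span_eq_top_of_card_eq_finrank' ?_
  rw [(WithLp.linearEquiv ⊤ ℝ (ι → ℝ)).finrank_eq, Module.finrank_fintype_fun_eq_card, hcard]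

end

lemma stronglyOrthSet [Nonempty ι] {n : ℕ} {x : Fin n → PiLp ⊤ (fun _ : ι => ℝ)}
    (hx : IsHadamardFamily x) : StronglyOrthSet x := by
  intro i₀
  refine ⟨hx.norm_eq_one, fun c ⟨j, hj, hcj⟩ => ?_⟩
  set c' := Function.update c i₀ 1
  have hc' : ∀ l ∈ Finset.univ.erase i₀, c' l = c l := fun l hl =>
    Function.update_of_ne (Finset.ne_of_mem_erase hl) _ _
  have hv : x i₀ + ∑ l ∈ Finset.univ.erase i₀, c l • x l = ∑ l, c' l • x l := by
    rw [← Finset.add_sum_erase _ _ (Finset.mem_univ i₀), Finset.sum_congr rfl fun l hl => by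
      rw [← hc' l hl]]
    simp [c']
  have hsq : 1 + c j ^ 2 ≤ ∑ l, c' l ^ 2 := by
    rw [← Finset.add_sum_erase _ _ (Finset.mem_univ i₀), Finset.sum_congr rfl fun l hl => by
      rw [hc' l hl]]
    simp only [c', Function.update_self, one_pow, add_le_add_iff_left]
    exact Finset.single_le_sum (fun l _ => sq_nonneg (c l))
      (Finset.mem_erase.2 ⟨hj, Finset.mem_univ j⟩)
  have hcj2 : 0 < c j ^ 2 := by positivity
  rw [hx.norm_eq_one, hv, ← one_lt_sq_iff₀ (norm_nonneg _)]
  linarith [hx.sum_sq_le_norm_sq c']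

end IsHadamardFamily

end Hadamard

lemma vec4_add (a b c d a' b' c' d' : ℝ) :
    vec4 a b c d + vec4 a' b' c' d' = vec4 (a + a') (b + b') (c + c') (d + d') := by
  ext k
  fin_cases k <;> rfl

lemma vec4_sub (a b c d a' b' c' d' : ℝ) :
    vec4 a b c d - vec4 a' b' c' d' = vec4 (a - a') (b - b') (c - c') (d - d') := by
  ext k
  fin_cases k <;> rfl

lemma norm_vec4 (a b c d : ℝ) : ‖vec4 a b c d‖ = max (max |a| |b|) (max |c| |d|) := by
  refine le_antisymm ?_ ?_
  · rw [← PiLp.norm_ofLp, pi_norm_le_iff_of_nonneg (by positivity)]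
    intro k
    fin_cases k <;> simp [vec4]
  · have h := PiLp.norm_apply_le (vec4 a b c d)
    exact max_le (max_le (h 0) (h 1)) (max_le (h 2) (h 3))

lemma isHadamardFamily_vec4 :
    IsHadamardFamily
      ![vec4 1 1 1 1, vec4 1 1 (-1) (-1), vec4 1 (-1) (-1) 1, vec4 1 (-1) 1 (-1)] := by
  refine ⟨fun i k => ?_, fun i j hij => ?_⟩
  · fin_cases i <;> fin_cases k <;> simp [vec4]
  · fin_cases i <;> fin_cases j <;> simp_all [vec4, Fin.sum_univ_four]

theorem stmt_14 :
    (LinearIndependent ℝ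
        ![vec4 1 1 1 1, vec4 1 1 (-1) (-1), vec4 1 (-1) (-1) 1, vec4 1 (-1) 1 (-1)] ∧
      Submodule.span ℝ (Set.range
        ![vec4 1 1 1 1, vec4 1 1 (-1) (-1), vec4 1 (-1) (-1) 1, vec4 1 (-1) 1 (-1)]) = ⊤ ∧
      StronglyOrthSet
        ![vec4 1 1 1 1, vec4 1 1 (-1) (-1), vec4 1 (-1) (-1) 1, vec4 1 (-1) 1 (-1)]) ∧
    ∃ g ∈ Submodule.span ℝ
        ({vec4 1 1 1 1, vec4 1 1 (-1) (-1), vec4 1 (-1) 1 (-1)} :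
          Set (PiLp ⊤ (fun _ : Fin 4 => ℝ))),
      ‖vec4 1 (-1) (-1) 1 - g‖ < ‖g‖ := by
  have hH := isHadamardFamily_vec4
  refine ⟨⟨hH.linearIndependent, hH.span_eq_top rfl, hH.stronglyOrthSet⟩, ?_⟩
  have hg : vec4 1 1 1 1 + vec4 1 1 (-1) (-1) + vec4 1 (-1) 1 (-1) = vec4 3 1 1 (-1) := by
    simp only [vec4_add]
    norm_num
  refine ⟨vec4 3 1 1 (-1), ?_, ?_⟩
  · rw [← hg]
    exact add_mem (add_mem (Submodule.subset_span (by simp)) (Submodule.subset_span (by simp)))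
      (Submodule.subset_span (by simp))
  · rw [vec4_sub, norm_vec4, norm_vec4]
    norm_num
end
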